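/- arXiv:2310.12511 — 2 statements merged into one kernel-verified Lean document; each statement's English description precedes it below -/
import Mathlib

section
/- Let ℓ ≥ 1 be an integer and K a field with q^ℓ elements containing F_q as a subfield. For every integer i with 1 ≤ i ≤ n, the number of codewords of Hamming weight i in the lifted code over K of C equals ∑_{j=1}^{k} A_i^{(j)} · (q^ℓ − 1)(q^ℓ − q)⋯(q^ℓ − q^{j−1}), where A_i^{(j)} = q^{(u−t)(k−j−t)} · [k−u, k−j−t]_q · [u, t]_q if n − i = q^{k−j} − q^t for some integer t with max(0, u−j) ≤ t ≤ u, and A_i^{(j)} = 0 if no such t exists. -/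
open Matrix Module

/-- The Gaussian binomial coefficient `[n, m]_q`. -/
def gbinom (q : ℕ) (n m : ℤ) : ℕ :=
  if 0 ≤ m ∧ m ≤ n then
    (∏ i ∈ Finset.range m.toNat, (q ^ n.toNat - q ^ i)) /
      (∏ i ∈ Finset.range m.toNat, (q ^ m.toNat - q ^ i))
  else 0

open Submodule LinearMap Finset

/-!
Write a codeword of the lifted code as `x G` with `x ∈ K^k`, and let `f : F_q^k → K` be the
`F_q`-linear map `v ↦ ∑ v_r x_r`. The coordinates of `x G` are the values of `f` on the columns,
that is on `F_q^k ∖ S_u`; `x ↦ f` is a bijection onto all `F_q`-linear maps, and since these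
columns span `F_q^k`, distinct `x` give distinct codewords. The zero
coordinates are the points of `ker f ∖ S_u`, so the weight is
`n - (q^{dim ker f} - q^{dim (ker f ∩ S_u)})` and depends only on `j = rank f` and
`t = dim (ker f ∩ S_u)`. There are `(q^ℓ - 1)⋯(q^ℓ - q^{j-1})` maps with a given kernel of
codimension `j`. A `(k-j)`-dimensional `W` with `dim (W ∩ S_u) = t` is given by `A = W ∩ S_u`
(`[u, t]_q` choices) and the image of `W` in `F_q^k / A`, a `(k-j-t)`-dimensional subspace
meeting `S_u / A` trivially (`q^{(u-t)(k-j-t)} [k-u, k-j-t]_q` choices, by double counting the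
tuples whose images modulo `S_u / A` are linearly independent).
-/

section Counting

variable {α β : Type*}

theorem card_subtype_exists_eq_and {f : α → β} (hf : Function.Injective f) (P : β → Prop) :
    Nat.card {b // (∃ a, f a = b) ∧ P b} = Nat.card {a // P (f a)} := by
  refine (Nat.card_eq_of_bijective (fun a => ⟨f a.1, ⟨a.1, rfl⟩, a.2⟩) ⟨?_, ?_⟩).symm
  · exact fun a b h => Subtype.ext (hf (congrArg Subtype.val h))
  · rintro ⟨_, ⟨a, rfl⟩, ha⟩
    exact ⟨⟨a, ha⟩, rfl⟩

variable [Finite α]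

theorem card_subtype_eq_sum_card_fiber (P : α → Prop) (g : α → β) (t : Finset β)
    (h : ∀ a, P a → g a ∈ t) :
    Nat.card {a // P a} = ∑ b ∈ t, Nat.card {a // P a ∧ g a = b} := by
  classical
  have := Fintype.ofFinite α
  simp only [Nat.card_eq_fintype_card, Fintype.card_subtype]
  rw [card_eq_sum_card_fiberwise fun a ha => h a (mem_filter.1 ha).2]
  simp only [filter_filter]

theorem card_subtype_eq_mul_of_card_fiber [Finite β] (P : α → Prop) (Q : β → Prop) (g : α → β)
    (h : ∀ a, P a → Q (g a)) (c : ℕ) (hc : ∀ b, Q b → Nat.card {a // P a ∧ g a = b} = c) :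
    Nat.card {a // P a} = Nat.card {b // Q b} * c := by
  classical
  have := Fintype.ofFinite β
  rw [card_subtype_eq_sum_card_fiber P g {b | Q b} (by simpa using h),
    sum_const_nat fun b hb => hc b (by simpa using hb), Nat.card_eq_fintype_card,
    Fintype.card_subtype]

end Counting

theorem prod_pow_sub_pow_pos {q : ℕ} (hq : 1 < q) (m : ℕ) :
    0 < ∏ i ∈ range m, (q ^ m - q ^ i) :=
  prod_pos fun _ hi => Nat.sub_pos_of_lt (Nat.pow_lt_pow_right hq (mem_range.1 hi))

theorem gbinom_eq_of_mul_eq {q a m c : ℕ} (hq : 1 < q)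
    (h : c * ∏ i ∈ range m, (q ^ m - q ^ i) = ∏ i ∈ range m, (q ^ a - q ^ i)) :
    gbinom q a m = c := by
  by_cases hma : m ≤ a
  · simp only [gbinom, Nat.cast_nonneg, Nat.cast_le, hma, and_self, if_true, Int.toNat_natCast]
    exact Nat.div_eq_of_eq_mul_left (prod_pow_sub_pow_pos hq m) h.symm
  · rw [Finset.prod_eq_zero (f := fun i => q ^ a - q ^ i) (mem_range.2 (not_le.1 hma))
      (Nat.sub_self _), Nat.mul_eq_zero] at h
    simp [gbinom, hma, h.resolve_right (prod_pow_sub_pow_pos hq m).ne']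

section Ring

variable {R M : Type*} [Ring R] [AddCommGroup M] [Module R M]

theorem Submodule.span_compl_eq_top {S : Submodule R M} (hS : S ≠ ⊤) :
    span R (S : Set M)ᶜ = ⊤ := by
  obtain ⟨v, hv⟩ : ∃ v, v ∉ S := by
    by_contra! h
    exact hS (eq_top_iff'.2 h)
  refine eq_top_iff'.2 fun w => ?_
  by_cases hw : w ∈ S
  · have hwv : w + v ∉ S := fun h => hv (by simpa using S.sub_mem h hw)
    simpa using sub_mem (subset_span hwv) (subset_span hv : v ∈ span R (S : Set M)ᶜ)
  · exact subset_span hw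

theorem Submodule.disjoint_map_mkQ_iff {A S : Submodule R M} (hAS : A ≤ S)
    (W : Submodule R (M ⧸ A)) :
    Disjoint W (S.map A.mkQ) ↔ W.comap A.mkQ ⊓ S = A := by
  rw [disjoint_iff, ← (comap_injective_of_surjective A.mkQ_surjective).eq_iff, comap_inf,
    comap_map_mkQ, sup_eq_right.2 hAS, comap_bot, ker_mkQ]

theorem Submodule.card_mkQ_fiber (S : Submodule R M) (y : M ⧸ S) :
    Nat.card {v // S.mkQ v = y} = Nat.card S := by
  obtain ⟨v₀, rfl⟩ := S.mkQ_surjective y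
  exact Nat.card_congr ((Equiv.subRight v₀).subtypeEquiv fun v => by simp [Quotient.eq])

end Ring

section Field

variable {F V L : Type*} [Field F] [AddCommGroup V] [Module F V] [AddCommGroup L] [Module F L]

theorem Module.Basis.injective_constr_iff {ι : Type*} (b : Basis ι F V) (s : ι → L) :
    Function.Injective (b.constr F s) ↔ LinearIndependent F s := by
  have hs : b.constr F s ∘ b = s := funext (b.constr_basis F s)
  constructor
  · intro h
    rw [← hs]
    exact b.linearIndependent.map' _ (ker_eq_bot.2 h)
  · intro h
    rw [← ker_eq_bot, ← top_disjoint, ← b.span_eq]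
    exact range_ker_disjoint (by rwa [hs])

variable [FiniteDimensional F V]

theorem Submodule.finrank_map_add_finrank_inf_ker (f : V →ₗ[F] L) (p : Submodule F V) :
    finrank F (p.map f) + finrank F (p ⊓ ker f : Submodule F V) = finrank F p := by
  have h := (f ∘ₗ p.subtype).finrank_range_add_finrank_ker
  rwa [range_comp, range_subtype, ker_comp, ← finrank_map_subtype_eq p,
    map_comap_subtype] at h

theorem Submodule.finrank_comap_mkQ (A : Submodule F V) (W : Submodule F (V ⧸ A)) :
    finrank F (W.comap A.mkQ) = finrank F W + finrank F A := by
  have h := (W.comap A.mkQ).finrank_map_add_finrank_inf_ker A.mkQ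
  rwa [map_comap_eq_of_surjective A.mkQ_surjective, ker_mkQ,
    inf_eq_right.2 (A.le_comap_mkQ W), eq_comm] at h

theorem finrank_sub_le_finrank_ker_inf (S : Submodule F V) (f : V →ₗ[F] L) :
    finrank F S - (finrank F V - finrank F (ker f)) ≤ finrank F (ker f ⊓ S : Submodule F V) := by
  have h := S.finrank_map_add_finrank_inf_ker f
  have hrange := f.finrank_range_add_finrank_ker
  have hmap : finrank F (S.map f) ≤ finrank F (range f) := finrank_mono (map_le_range)
  rw [inf_comm] at h
  omega

theorem finrank_sub_finrank_ker_mem_Icc {f : V →ₗ[F] L} (hf : f ≠ 0) :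
    finrank F V - finrank F (ker f) ∈ Icc 1 (finrank F V) := by
  have := finrank_lt (ker_eq_top.not.2 hf)
  exact mem_Icc.2 ⟨by omega, by omega⟩

theorem card_linearIndependent_comp_mkQ_span_eq {S W : Submodule F V} {m : ℕ}
    (hWm : finrank F W = m) (hWS : Disjoint W S) :
    Nat.card {s : Fin m → V // LinearIndependent F (S.mkQ ∘ s) ∧ span F (Set.range s) = W} =
      Nat.card {s : Fin m → W // LinearIndependent F s} := by
  symm
  refine Nat.card_congr
    { toFun s := ⟨W.subtype ∘ s.1, ?_, ?_⟩
      invFun s := ⟨fun i => ⟨s.1 i, s.2.2.le (subset_span (Set.mem_range_self i))⟩, ?_⟩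
      left_inv _ := rfl
      right_inv _ := rfl }
  · refine s.2.map' (S.mkQ ∘ₗ W.subtype) ?_
    rw [ker_comp, ker_mkQ, ← disjoint_iff_comap_eq_bot.1 hWS]
  · refine eq_of_le_of_finrank_le (span_le.2 (Set.range_subset_iff.2 fun i => (s.1 i).2)) ?_
    rw [finrank_span_eq_card (s.2.map' W.subtype W.ker_subtype), Fintype.card_fin, hWm]
  · exact LinearIndependent.of_comp W.subtype (s.2.1.of_comp _)

theorem card_submodule_inf_eq {A S : Submodule F V} (hAS : A ≤ S) {w t : ℕ}
    (hAt : finrank F A = t) (htw : t ≤ w) :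
    Nat.card {W : Submodule F V //
        (finrank F W = w ∧ finrank F (W ⊓ S : Submodule F V) = t) ∧ W ⊓ S = A} =
      Nat.card {W : Submodule F (V ⧸ A) // finrank F W = w - t ∧ Disjoint W (S.map A.mkQ)} := by
  symm
  have hcomap (W : Submodule F V) (hW : W ⊓ S = A) : (W.map A.mkQ).comap A.mkQ = W := by
    rw [comap_map_mkQ, sup_eq_right.2 (hW ▸ inf_le_left)]
  refine Nat.card_congr
    { toFun W := ⟨W.1.comap A.mkQ, ⟨?_, ?_⟩, (disjoint_map_mkQ_iff hAS _).1 W.2.2⟩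
      invFun W := ⟨W.1.map A.mkQ, ?_,
        (disjoint_map_mkQ_iff hAS _).2 (by rw [hcomap W W.2.2]; exact W.2.2)⟩
      left_inv W := Subtype.ext (map_comap_eq_of_surjective A.mkQ_surjective _)
      right_inv W := Subtype.ext (hcomap W W.2.2) }
  · rw [finrank_comap_mkQ, W.2.1, hAt]
    omega
  · rw [(disjoint_map_mkQ_iff hAS _).1 W.2.2, hAt]
  · have h := finrank_comap_mkQ A (W.1.map A.mkQ)
    rw [hcomap W W.2.2, W.2.1.1, hAt] at h
    omega

end Field

section FiniteField

variable {F V L : Type*} [Field F] [Fintype F] [AddCommGroup V] [Module F V] [Finite V]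
  [AddCommGroup L] [Module F L]

local notation "q" => Fintype.card F

theorem card_mem_and_not_mem (U S : Submodule F V) :
    Nat.card {v // v ∈ U ∧ v ∉ S} = q ^ finrank F U - q ^ finrank F (U ⊓ S : Submodule F V) := by
  have h := Set.ncard_inter_add_ncard_sdiff_eq_ncard (U : Set V) S
  rw [← coe_inf, ← Nat.card_coe_set_eq, ← Nat.card_coe_set_eq, ← Nat.card_coe_set_eq] at h
  have hcard (W : Submodule F V) : Nat.card (W : Set V) = q ^ finrank F W := by
    rw [SetLike.coe_sort_coe, natCard_eq_pow_finrank (K := F), Nat.card_eq_fintype_card]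
  rw [hcard, hcard] at h
  change Nat.card ↥((U : Set V) \ S) = _
  omega

theorem card_linearIndependent_fin (m : ℕ) :
    Nat.card {s : Fin m → V // LinearIndependent F s} =
      ∏ i ∈ range m, (q ^ finrank F V - q ^ i) := by
  by_cases hm : m ≤ finrank F V
  · rw [card_linearIndependent hm, Finset.prod_range fun i => q ^ finrank F V - q ^ i]
  · rw [Finset.prod_eq_zero (f := fun i => q ^ finrank F V - q ^ i) (mem_range.2 (not_le.1 hm))
      (Nat.sub_self _), Nat.card_eq_zero]
    exact Or.inl ⟨fun s => hm (by simpa using s.2.fintype_card_le_finrank)⟩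

theorem card_linearIndependent_comp_mkQ (S : Submodule F V) (m : ℕ) :
    Nat.card {s : Fin m → V // LinearIndependent F (S.mkQ ∘ s)} =
      q ^ (finrank F S * m) * ∏ i ∈ range m, (q ^ (finrank F V - finrank F S) - q ^ i) := by
  have := Module.finite_of_finite F (M := V ⧸ S)
  rw [card_subtype_eq_mul_of_card_fiber _ (fun t : Fin m → V ⧸ S => LinearIndependent F t)
    (S.mkQ ∘ ·) (fun _ h => h) (q ^ (finrank F S * m)), card_linearIndependent_fin,
    finrank_quotient, mul_comm]
  intro t ht
  calc Nat.card {s : Fin m → V // LinearIndependent F (S.mkQ ∘ s) ∧ S.mkQ ∘ s = t}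
      = Nat.card {s : Fin m → V // ∀ i, S.mkQ (s i) = t i} :=
        Nat.card_congr <| Equiv.subtypeEquivRight fun s =>
          ⟨fun h => congrFun h.2, fun h => ⟨by rwa [show S.mkQ ∘ s = t from funext h], funext h⟩⟩
    _ = ∏ i, Nat.card {v // S.mkQ v = t i} := by
        rw [Nat.card_congr (Equiv.subtypePiEquivPi (p := fun i v => S.mkQ v = t i)), Nat.card_pi]
    _ = q ^ (finrank F S * m) := by
        rw [Finset.prod_congr rfl fun i _ => S.card_mkQ_fiber (t i)]
        simp [natCard_eq_pow_finrank (K := F), Nat.card_eq_fintype_card, pow_mul]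

theorem card_submodule_finrank_disjoint_mul (S : Submodule F V) (m : ℕ) :
    Nat.card {W : Submodule F V // finrank F W = m ∧ Disjoint W S} *
        ∏ i ∈ range m, (q ^ m - q ^ i) =
      q ^ (finrank F S * m) * ∏ i ∈ range m, (q ^ (finrank F V - finrank F S) - q ^ i) := by
  rw [← card_linearIndependent_comp_mkQ, card_subtype_eq_mul_of_card_fiber _
    (fun W : Submodule F V => finrank F W = m ∧ Disjoint W S) (fun s => span F (Set.range s))]
  · intro s hs
    refine ⟨by rw [finrank_span_eq_card (hs.of_comp _), Fintype.card_fin], ?_⟩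
    simpa using range_ker_disjoint hs
  · rintro W ⟨hWm, hWS⟩
    rw [card_linearIndependent_comp_mkQ_span_eq hWm hWS, card_linearIndependent_fin, hWm]

theorem card_submodule_finrank_mul (m : ℕ) :
    Nat.card {W : Submodule F V // finrank F W = m} * ∏ i ∈ range m, (q ^ m - q ^ i) =
      ∏ i ∈ range m, (q ^ finrank F V - q ^ i) := by
  simpa using card_submodule_finrank_disjoint_mul (⊥ : Submodule F V) m

theorem card_submodule_finrank (m : ℕ) :
    Nat.card {W : Submodule F V // finrank F W = m} = gbinom q (finrank F V) m :=
  (gbinom_eq_of_mul_eq Fintype.one_lt_card (card_submodule_finrank_mul m)).symm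

theorem card_submodule_finrank_disjoint (S : Submodule F V) (m : ℕ) :
    Nat.card {W : Submodule F V // finrank F W = m ∧ Disjoint W S} =
      q ^ (finrank F S * m) * gbinom q (finrank F V - finrank F S : ℕ) m := by
  have := Module.finite_of_finite F (M := V ⧸ S)
  apply Nat.eq_of_mul_eq_mul_right (prod_pow_sub_pow_pos (Fintype.one_lt_card (α := F)) m)
  rw [card_submodule_finrank_disjoint_mul, mul_assoc, ← finrank_quotient,
    ← card_submodule_finrank (F := F) (V := V ⧸ S), card_submodule_finrank_mul]

theorem card_submodule_le_finrank (S : Submodule F V) (t : ℕ) :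
    Nat.card {A : Submodule F V // A ≤ S ∧ finrank F A = t} = gbinom q (finrank F S) t := by
  rw [← card_submodule_finrank]
  refine (Nat.card_congr ?_).symm
  exact ((MapSubtype.orderIso S).toEquiv.subtypeEquiv fun A => by
    change _ ↔ finrank F (A.map S.subtype) = t
    rw [finrank_map_subtype_eq]).trans
    (Equiv.subtypeSubtypeEquivSubtypeInter (· ≤ S) fun A => finrank F A = t)

theorem card_submodule_finrank_inf (S : Submodule F V) {w t : ℕ} (htw : t ≤ w) :
    Nat.card {W : Submodule F V // finrank F W = w ∧ finrank F (W ⊓ S : Submodule F V) = t} =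
      q ^ ((finrank F S - t) * (w - t)) * gbinom q (finrank F V - finrank F S : ℕ) (w - t : ℕ) *
        gbinom q (finrank F S) t := by
  rw [card_subtype_eq_mul_of_card_fiber _ (fun A : Submodule F V => A ≤ S ∧ finrank F A = t)
    (· ⊓ S) (fun W hW => ⟨inf_le_right, hW.2⟩), card_submodule_le_finrank, mul_comm]
  rintro A ⟨hAS, hAt⟩
  have := Module.finite_of_finite F (M := V ⧸ A)
  have hmap := S.finrank_map_add_finrank_inf_ker A.mkQ
  rw [ker_mkQ, inf_eq_right.2 hAS] at hmap
  have htS : t ≤ finrank F S := hAt ▸ finrank_mono hAS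
  rw [card_submodule_inf_eq hAS hAt htw, card_submodule_finrank_disjoint, finrank_quotient, hAt,
    show finrank F (S.map A.mkQ) = finrank F S - t by omega,
    show finrank F V - t - (finrank F S - t) = finrank F V - finrank F S by omega]

theorem hammingNorm_comp_eq_iff [DecidableEq L] {ι : Type*} [Fintype ι] (S : Submodule F V)
    {col : ι → V} (hinj : Function.Injective col) (hran : Set.range col = (S : Set V)ᶜ)
    (f : V →ₗ[F] L) (i : ℕ) :
    hammingNorm (fun c => f (col c)) = i ↔
      (q : ℤ) ^ finrank F (ker f) - q ^ finrank F (ker f ⊓ S : Submodule F V) =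
        Fintype.card ι - i := by
  have hzeros : Nat.card {c // f (col c) = 0} = Nat.card {v // v ∈ ker f ∧ v ∉ S} := by
    let e : ι ≃ {v // v ∉ S} := (Equiv.ofInjective col hinj).trans (Equiv.setCongr hran)
    exact Nat.card_congr ((e.subtypeEquiv fun c => Iff.rfl).trans
      ((Equiv.subtypeSubtypeEquivSubtypeInter (· ∉ S) (f · = 0)).trans
        (Equiv.subtypeEquivRight fun v => by rw [mem_ker, and_comm])))
  have hsplit : hammingNorm (fun c => f (col c)) + Nat.card {c // f (col c) = 0} =
      Fintype.card ι := by
    rw [hammingNorm, Nat.card_eq_fintype_card, Fintype.card_subtype, ← card_univ]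
    simpa using card_filter_add_card_filter_not (s := univ) fun c => f (col c) ≠ 0
  have hle : q ^ finrank F (ker f ⊓ S : Submodule F V) ≤ q ^ finrank F (ker f) :=
    Nat.pow_le_pow_right Fintype.card_pos (finrank_mono inf_le_left)
  rw [hzeros, card_mem_and_not_mem] at hsplit
  zify [hle] at hsplit
  omega

theorem card_linearMap_finrank_ker_inf_eq_zero (S : Submodule F V) {j : ℕ} {z : ℤ}
    (h : ¬∃ t, finrank F S - j ≤ t ∧ t ≤ finrank F S ∧ z = q ^ (finrank F V - j) - q ^ t) :
    Nat.card {f : V →ₗ[F] L //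
        (q : ℤ) ^ finrank F (ker f) - q ^ finrank F (ker f ⊓ S : Submodule F V) = z ∧
          finrank F V - finrank F (ker f) = j} = 0 := by
  refine Nat.card_eq_zero.2 (Or.inl ⟨?_⟩)
  rintro ⟨f, hz, hrank⟩
  have hker := (ker f).finrank_le
  have hlow := finrank_sub_le_finrank_ker_inf S f
  refine h ⟨finrank F (ker f ⊓ S : Submodule F V), by omega, finrank_mono inf_le_right, ?_⟩
  rw [← hz, show finrank F (ker f) = finrank F V - j by omega]

variable [Finite L]

theorem card_injective_linearMap :
    Nat.card {g : V →ₗ[F] L // Function.Injective g} =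
      ∏ i ∈ range (finrank F V), (q ^ finrank F L - q ^ i) := by
  let b := Module.finBasis F V
  rw [← card_linearIndependent_fin]
  exact (Nat.card_congr ((b.constr F).toEquiv.subtypeEquiv
    fun s => (b.injective_constr_iff s).symm)).symm

theorem card_linearMap_ker_eq (U : Submodule F V) :
    Nat.card {f : V →ₗ[F] L // ker f = U} =
      ∏ i ∈ range (finrank F V - finrank F U), (q ^ finrank F L - q ^ i) := by
  have := Module.finite_of_finite F (M := V ⧸ U)
  rw [← finrank_quotient, ← card_injective_linearMap]
  refine Nat.card_congr
    { toFun f := ⟨U.liftQ f f.2.ge, ker_eq_bot.1 (U.ker_liftQ_eq_bot _ _ f.2.le)⟩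
      invFun g := ⟨g.1 ∘ₗ U.mkQ, ?_⟩
      left_inv f := Subtype.ext (U.liftQ_mkQ _ _)
      right_inv g := Subtype.ext (linearMap_qext _ (U.liftQ_mkQ _ _)) }
  rw [ker_comp, ker_eq_bot.2 g.2, comap_bot, ker_mkQ]

theorem card_linearMap_ker_mem (Q : Submodule F V → Prop) {d : ℕ}
    (hQ : ∀ W, Q W → finrank F W = d) :
    Nat.card {f : V →ₗ[F] L // Q (ker f)} =
      Nat.card {W // Q W} * ∏ i ∈ range (finrank F V - d), (q ^ finrank F L - q ^ i) := by
  have := Module.finite_of_finite F (M := V →ₗ[F] L)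
  refine card_subtype_eq_mul_of_card_fiber _ Q ker (fun _ h => h) _ fun W hW => ?_
  rw [← hQ W hW, ← card_linearMap_ker_eq]
  exact Nat.card_congr (Equiv.subtypeEquivRight fun f => ⟨And.right, fun h => ⟨h ▸ hW, h⟩⟩)

theorem card_linearMap_finrank_ker_inf (S : Submodule F V) {j t : ℕ} (hj : j ≤ finrank F V)
    (ht : t ≤ finrank F V - j) :
    Nat.card {f : V →ₗ[F] L //
        (q : ℤ) ^ finrank F (ker f) - q ^ finrank F (ker f ⊓ S : Submodule F V) =
          q ^ (finrank F V - j) - q ^ t ∧ finrank F V - finrank F (ker f) = j} =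
      q ^ ((finrank F S - t) * (finrank F V - j - t)) *
        gbinom q (finrank F V - finrank F S : ℕ) (finrank F V - j - t : ℕ) *
        gbinom q (finrank F S) t * ∏ i ∈ range j, (q ^ finrank F L - q ^ i) := by
  have hiff (W : Submodule F V) :
      ((q : ℤ) ^ finrank F W - q ^ finrank F (W ⊓ S : Submodule F V) =
          q ^ (finrank F V - j) - q ^ t ∧ finrank F V - finrank F W = j) ↔
        finrank F W = finrank F V - j ∧ finrank F (W ⊓ S : Submodule F V) = t := by
    have hW := W.finrank_le
    constructor
    · rintro ⟨hpow, hrank⟩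
      have hWj : finrank F W = finrank F V - j := by omega
      rw [hWj, sub_right_inj] at hpow
      exact ⟨hWj, Nat.pow_right_injective Fintype.one_lt_card (by exact_mod_cast hpow)⟩
    · rintro ⟨hWj, hWt⟩
      rw [hWj, hWt]
      exact ⟨rfl, by omega⟩
  rw [Nat.card_congr (Equiv.subtypeEquivRight fun f => hiff (ker f)),
    card_linearMap_ker_mem (fun W => finrank F W = finrank F V - j ∧
      finrank F (W ⊓ S : Submodule F V) = t) fun W h => h.1,
    card_submodule_finrank_inf S ht, Nat.sub_sub_self hj]

end FiniteField

section LiftedCode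

variable {F K : Type*} [Field F] [Field K] [Algebra F K] {k : ℕ} {ι : Type*}

theorem vecMul_map_algebraMap_apply (x : Fin k → K) (G : Matrix (Fin k) ι F) (c : ι) :
    vecMul x (G.map (algebraMap F K)) c = (Pi.basisFun F (Fin k)).constr F x fun r => G r c := by
  simp [vecMul, dotProduct, Basis.constr_apply_fintype, Algebra.smul_def, mul_comm]

theorem card_liftedCode_eq_card_linearMap (G : Matrix (Fin k) ι F)
    (hG : span F (Set.range fun c r => G r c) = ⊤) (P : (ι → K) → Prop) :
    Nat.card {c : ι → K // (∃ x : Fin k → K, vecMul x (G.map (algebraMap F K)) = c) ∧ P c} =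
      Nat.card {f : (Fin k → F) →ₗ[F] K // P fun c => f fun r => G r c} := by
  let Φ := (Pi.basisFun F (Fin k)).constr F (M' := K)
  have hΦ (x : Fin k → K) : vecMul x (G.map (algebraMap F K)) = fun c => Φ x fun r => G r c :=
    funext (vecMul_map_algebraMap_apply x G)
  have hinj : Function.Injective fun x : Fin k → K => vecMul x (G.map (algebraMap F K)) := by
    intro x y hxy
    refine Φ.injective (ext_on hG ?_)
    rintro _ ⟨c, rfl⟩
    simpa [hΦ] using congrFun hxy c
  rw [card_subtype_exists_eq_and hinj]
  exact Nat.card_congr (Φ.toEquiv.subtypeEquiv fun x => by rw [hΦ]; rfl)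

end LiftedCode

theorem stmt_6_general (q k n u ℓ : ℕ)
    (F K : Type) [Field F] [Fintype F] [Field K] [Fintype K] [DecidableEq K] [Algebra F K]
    (hF : Fintype.card F = q) (hK : Fintype.card K = q ^ ℓ)
    (S : Submodule F (Fin k → F)) (hS : Module.finrank F S = u)
    (G : Matrix (Fin k) (Fin n) F)
    (hinj : Function.Injective fun c : Fin n => (fun r => G r c))
    (hran : Set.range (fun c : Fin n => (fun r => G r c)) = (S : Set (Fin k → F))ᶜ)
    (A : ℕ → ℕ → ℕ)
    (hA1 : ∀ i j t : ℕ, 1 ≤ i → i ≤ n → 1 ≤ j → j ≤ k → u - j ≤ t → t ≤ u →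
        ((n : ℤ) - i = (q : ℤ) ^ (k - j) - (q : ℤ) ^ t) →
        A i j = q ^ ((u - t) * (k - j - t)) *
          gbinom q ((k : ℤ) - u) ((k : ℤ) - j - t) * gbinom q u t)
    (hA0 : ∀ i j : ℕ, 1 ≤ i → i ≤ n → 1 ≤ j → j ≤ k →
        (¬ ∃ t : ℕ, u - j ≤ t ∧ t ≤ u ∧ ((n : ℤ) - i = (q : ℤ) ^ (k - j) - (q : ℤ) ^ t)) →
        A i j = 0)
    (i : ℕ) (hi1 : 1 ≤ i) (hin : i ≤ n) :
    Nat.card {c : Fin n → K //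
        (∃ x : Fin k → K, Matrix.vecMul x (G.map (algebraMap F K)) = c) ∧ hammingNorm c = i} =
      ∑ j ∈ Finset.Icc 1 k, A i j * ∏ s ∈ Finset.range j, (q ^ ℓ - q ^ s) := by
  have hq : 1 < q := hF ▸ Fintype.one_lt_card
  have hdim : finrank F (Fin k → F) = k := by simp
  have hS_ne_top : S ≠ ⊤ := by
    have h0 : (fun r => G r ⟨0, by omega⟩) ∈ (S : Set (Fin k → F))ᶜ := hran ▸ Set.mem_range_self _
    exact fun h => h0 (h ▸ mem_top)
  have := Module.finite_of_finite F (M := (Fin k → F) →ₗ[F] K)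
  rw [card_liftedCode_eq_card_linearMap G (hran ▸ span_compl_eq_top hS_ne_top),
    card_subtype_eq_sum_card_fiber _ (fun f => k - finrank F (ker f)) (Icc 1 k) fun f hf => by
      have hf0 : f ≠ 0 := by
        rintro rfl
        exact (Nat.one_le_iff_ne_zero.1 hi1) (hf.symm.trans hammingNorm_zero)
      simpa [hdim] using finrank_sub_finrank_ker_mem_Icc hf0]
  refine sum_congr rfl fun j hj => ?_
  obtain ⟨hj1, hjk⟩ := mem_Icc.1 hj
  simp_rw [hammingNorm_comp_eq_iff S hinj hran, Fintype.card_fin, hF]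
  by_cases ht : ∃ t, u - j ≤ t ∧ t ≤ u ∧ (n : ℤ) - i = (q : ℤ) ^ (k - j) - (q : ℤ) ^ t
  · obtain ⟨t, htj, htu, heq⟩ := ht
    have htk : t ≤ k - j := (Nat.pow_le_pow_iff_right hq).1 <| by
      exact_mod_cast (by omega : (q : ℤ) ^ t ≤ (q : ℤ) ^ (k - j))
    have hu : u ≤ k := hS ▸ S.finrank_le.trans_eq hdim
    have key := card_linearMap_finrank_ker_inf (L := K) S (j := j) (t := t)
      (by rw [hdim]; exact hjk) (by rw [hdim]; exact htk)
    rw [hdim, hS, ← Module.card_eq_pow_finrank, hK, hF] at key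
    rw [hA1 i j t hi1 hin hj1 hjk htj htu heq, heq, key,
      show ((k - u : ℕ) : ℤ) = k - u by omega, show ((k - j - t : ℕ) : ℤ) = k - j - t by omega]
  · have key := card_linearMap_finrank_ker_inf_eq_zero (L := K) S (z := n - i) (j := j)
      (by rwa [hdim, hS, hF])
    rw [hdim, hF] at key
    rw [hA0 i j hi1 hin hj1 hjk ht, zero_mul, key]

/-- Weight enumerator of the lifted code of the Solomon–Stiffler code with `p = 1`:
`C` is generated by the matrix `G` whose columns are exactly the vectors of
`F_q^k ∖ S_u` (each once), `n = q^k - q^u`.  For `1 ≤ i ≤ n`, the number of weight-`i`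
codewords of the lifted code over `K` is `∑_{j=1}^k A_i^{(j)} (q^ℓ-1)⋯(q^ℓ-q^{j-1})`,
where `A_i^{(j)} = q^{(u-t)(k-j-t)} [k-u, k-j-t]_q [u, t]_q` if
`n - i = q^{k-j} - q^t` for some `max(0, u-j) ≤ t ≤ u`, and `A_i^{(j)} = 0` otherwise. -/
theorem stmt_6 (q k n u ℓ : ℕ) (hk : 2 ≤ k) (hu1 : 1 ≤ u) (huk : u ≤ k - 1) (hℓ : 1 ≤ ℓ)
    (F K : Type) [Field F] [Fintype F] [Field K] [Fintype K] [DecidableEq K] [Algebra F K]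
    (hF : Fintype.card F = q) (hK : Fintype.card K = q ^ ℓ)
    (S : Submodule F (Fin k → F)) (hS : Module.finrank F S = u)
    (G : Matrix (Fin k) (Fin n) F)
    (hinj : Function.Injective fun c : Fin n => (fun r => G r c))
    (hran : Set.range (fun c : Fin n => (fun r => G r c)) = (S : Set (Fin k → F))ᶜ)
    (hn : n = q ^ k - q ^ u)
    (A : ℕ → ℕ → ℕ)
    (hA1 : ∀ i j t : ℕ, 1 ≤ i → i ≤ n → 1 ≤ j → j ≤ k → u - j ≤ t → t ≤ u →
        ((n : ℤ) - i = (q : ℤ) ^ (k - j) - (q : ℤ) ^ t) →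
        A i j = q ^ ((u - t) * (k - j - t)) *
          gbinom q ((k : ℤ) - u) ((k : ℤ) - j - t) * gbinom q u t)
    (hA0 : ∀ i j : ℕ, 1 ≤ i → i ≤ n → 1 ≤ j → j ≤ k →
        (¬ ∃ t : ℕ, u - j ≤ t ∧ t ≤ u ∧ ((n : ℤ) - i = (q : ℤ) ^ (k - j) - (q : ℤ) ^ t)) →
        A i j = 0)
    (i : ℕ) (hi1 : 1 ≤ i) (hin : i ≤ n) :
    Nat.card {c : Fin n → K //
        (∃ x : Fin k → K, Matrix.vecMul x (G.map (algebraMap F K)) = c) ∧ hammingNorm c = i} =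
      ∑ j ∈ Finset.Icc 1 k, A i j * ∏ s ∈ Finset.range j, (q ^ ℓ - q ^ s) :=
  stmt_6_general q k n u ℓ F K hF hK S hS G hinj hran A hA1 hA0 i hi1 hin
end

section
/- For all integers j, i with 1 ≤ j ≤ k and 0 ≤ i ≤ n, the number of j-dimensional subcodes of C with support weight i equals q^{(u−t)(k−j−t)} · [k−u, k−j−t]_q · [u, t]_q if n − i = q^{k−j} − q^t for some integer t with max(0, u−j) ≤ t ≤ u, and equals 0 if no such t exists. -/
open Matrix Module

noncomputable def suppWeight {F : Type} [Semiring F] {n : ℕ} (D : Submodule F (Fin n → F)) : ℕ :=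
  Nat.card {idx : Fin n // ∃ c ∈ D, c idx ≠ 0}

/-
The map `x ↦ xG` is injective, so `j`-dimensional subcodes correspond to `j`-dimensional spaces of
linear forms on `F_q^k`, i.e. (through their common kernels) to `(k - j)`-dimensional subspaces `U`.
The coordinates where the subcode vanishes are the columns lying in `U`, i.e. the vectors of
`U ∖ S`, so `n - χ(D) = q^{k-j} - q^{dim (U ∩ S)}` and the weight pins down `t = dim (U ∩ S)`.
Writing `N(d, m) = ∏_{i<m} (q^d - q^i)` for the number of linearly independent `m`-tuples in
`F_q^d`, the `m`-dimensional `U` with `dim (U ∩ S) = t` are counted by double counting pairs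
(basis of `U ∩ S`, vectors of `U` independent modulo `S`): there are
`N(u, t) q^{u(m-t)} N(k-u, m-t)` such pairs, and `N(t, t) q^{t(m-t)} N(m-t, m-t)` of them span a
given `U`.
-/

open Submodule
open LinearMap (ker range)

lemma Nat.card_eq_card_mul_of_card_fiber {α β : Type*} [Finite α] [Finite β] (f : α → β)
    {c : ℕ} (h : ∀ b, Nat.card {a // f a = b} = c) : Nat.card α = Nat.card β * c := by
  have := Fintype.ofFinite β
  rw [← Nat.card_congr (Equiv.sigmaFiberEquiv f), Nat.card_sigma]
  simp [h, Nat.card_eq_fintype_card]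

def linIndepCount (q d m : ℕ) : ℕ :=
  ∏ i ∈ Finset.range m, (q ^ d - q ^ i)

lemma linIndepCount_pos {q d m : ℕ} (hq : 1 < q) (hm : m ≤ d) : 0 < linIndepCount q d m :=
  Finset.prod_pos fun i hi =>
    Nat.sub_pos_of_lt (Nat.pow_lt_pow_right hq (by simp only [Finset.mem_range] at hi; omega))

section Counting

variable {K X Z : Type*} [Field K] [AddCommGroup X] [Module K X] [AddCommGroup Z] [Module K Z]

lemma finrank_comap_subtype (W U : Submodule K X) :
    finrank K (U.comap W.subtype) = finrank K ↥(W ⊓ U) := by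
  rw [(equivMapOfInjective _ W.injective_subtype _).finrank_eq, map_comap_subtype]

variable (S : Submodule K X)

/-- When `finrank W = t + r` and `finrank (W ⊓ S) = t`, these are the bases of `W` whose first
`t` vectors form a basis of `W ⊓ S`. -/
def adaptedFrames (W : Submodule K X) (t r : ℕ) : Set ((Fin t → X) × (Fin r → X)) :=
  {p | ((∀ i, p.1 i ∈ W ⊓ S) ∧ LinearIndependent K p.1) ∧
    ((∀ i, p.2 i ∈ W) ∧ LinearIndependent K (S.mkQ ∘ p.2))}

section

variable {S} {W : Submodule K X} {t r : ℕ} {p : (Fin t → X) × (Fin r → X)}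

lemma span_inf_eq_of_mem_adaptedFrames (hp : p ∈ adaptedFrames S W t r) :
    span K (Set.range (Sum.elim p.1 p.2)) ⊓ S = span K (Set.range p.1) := by
  obtain ⟨⟨hgS, -⟩, -, hh⟩ := hp
  have hg : span K (Set.range p.1) ≤ S := span_le.2 (Set.range_subset_iff.2 fun i => (hgS i).2)
  have hdisj : Disjoint (span K (Set.range p.2)) S := S.ker_mkQ ▸ range_ker_disjoint hh
  rw [Set.Sum.elim_range, span_union, sup_inf_assoc_of_le _ hg, hdisj.eq_bot, sup_bot_eq]

lemma linearIndependent_sumElim_of_mem_adaptedFrames (hp : p ∈ adaptedFrames S W t r) :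
    LinearIndependent K (Sum.elim p.1 p.2) := by
  obtain ⟨⟨hgS, hg⟩, -, hh⟩ := hp
  have hgS' : span K (Set.range p.1) ≤ S := span_le.2 (Set.range_subset_iff.2 fun i => (hgS i).2)
  exact hg.sum_type (hh.of_comp _) <| (S.ker_mkQ ▸ range_ker_disjoint hh).symm.mono_left hgS'

lemma finrank_span_of_mem_adaptedFrames (hp : p ∈ adaptedFrames S W t r) :
    finrank K (span K (Set.range (Sum.elim p.1 p.2))) = t + r ∧
      finrank K ↥(span K (Set.range (Sum.elim p.1 p.2)) ⊓ S) = t := by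
  rw [span_inf_eq_of_mem_adaptedFrames hp, finrank_span_eq_card hp.1.2,
    finrank_span_eq_card (linearIndependent_sumElim_of_mem_adaptedFrames hp)]
  simp

lemma mem_adaptedFrames_top_and_span_eq_iff [FiniteDimensional K X] (hW : finrank K W = t + r) :
    p ∈ adaptedFrames S ⊤ t r ∧ span K (Set.range (Sum.elim p.1 p.2)) = W ↔
      p ∈ adaptedFrames S W t r := by
  constructor
  · rintro ⟨⟨⟨hgS, hg⟩, -, hh⟩, hspan⟩
    have hmem (x : Fin t ⊕ Fin r) : Sum.elim p.1 p.2 x ∈ W := hspan ▸ subset_span ⟨x, rfl⟩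
    exact ⟨⟨fun i => ⟨hmem (.inl i), (hgS i).2⟩, hg⟩, fun i => hmem (.inr i), hh⟩
  · intro hp
    refine ⟨⟨⟨fun i => ⟨mem_top, (hp.1.1 i).2⟩, hp.1.2⟩, fun _ => mem_top, hp.2.2⟩, ?_⟩
    refine eq_of_le_of_finrank_eq (span_le.2 (Set.range_subset_iff.2 ?_)) ?_
    · rintro (i | i)
      exacts [(hp.1.1 i).1, hp.2.1 i]
    · rw [(finrank_span_of_mem_adaptedFrames hp).1, hW]

end

variable [Fintype K] [Finite X]

local notation "q" => Fintype.card K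

lemma card_linearIndependent_eq_linIndepCount {m : ℕ} (hm : m ≤ finrank K X) :
    Nat.card {s : Fin m → X // LinearIndependent K s} = linIndepCount q (finrank K X) m := by
  rw [card_linearIndependent hm, linIndepCount,
    Fin.prod_univ_eq_prod_range (fun i => q ^ finrank K X - q ^ i)]

lemma natCard_submodule (W : Submodule K X) : Nat.card W = q ^ finrank K W := by
  rw [Module.natCard_eq_pow_finrank (K := K), Nat.card_eq_fintype_card]

lemma card_linearIndependent_comp (φ : X →ₗ[K] Z) {r : ℕ} (hr : r ≤ finrank K (range φ)) :
    Nat.card {h : Fin r → X // LinearIndependent K (φ ∘ h)} =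
      linIndepCount q (finrank K (range φ)) r * q ^ (finrank K (ker φ) * r) := by
  have : Finite (range φ) := Module.finite_of_finite K
  let ψ := φ.rangeRestrict
  have hψ (h : Fin r → X) : LinearIndependent K (ψ ∘ h) ↔ LinearIndependent K (φ ∘ h) :=
    ((range φ).subtype.linearIndependent_iff (v := ψ ∘ h) (ker_subtype _)).symm
  have hfiber (z : range φ) : Nat.card {x // ψ x = z} = q ^ finrank K (ker φ) := by
    rw [← φ.ker_rangeRestrict, ← natCard_submodule]
    exact Nat.card_congr (AddMonoidHom.fiberEquivKerOfSurjective
      (f := ψ.toAddMonoidHom) φ.surjective_rangeRestrict z)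
  have hfib (g : {g : Fin r → range φ // LinearIndependent K g}) :
      Nat.card {h : {h : Fin r → X // LinearIndependent K (φ ∘ h)} //
        (⟨ψ ∘ h.1, (hψ h).2 h.2⟩ : {g : Fin r → range φ // LinearIndependent K g}) = g} =
        q ^ (finrank K (ker φ) * r) := by
    have e : {h : {h : Fin r → X // LinearIndependent K (φ ∘ h)} //
        (⟨ψ ∘ h.1, (hψ h).2 h.2⟩ : {g : Fin r → range φ // LinearIndependent K g}) = g} ≃
        ∀ i, {x // ψ x = g.1 i} :=
      { toFun h i := ⟨h.1.1 i, congrFun (congrArg Subtype.val h.2) i⟩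
        invFun x :=
          have hx : ψ ∘ (fun i => (x i).1) = g.1 := funext fun i => (x i).2
          ⟨⟨fun i => (x i).1, (hψ _).1 (by rw [hx]; exact g.2)⟩, Subtype.ext hx⟩
        left_inv _ := rfl
        right_inv _ := rfl }
    rw [Nat.card_congr e, Nat.card_pi]
    simp [hfiber, pow_mul]
  rw [Nat.card_eq_card_mul_of_card_fiber _ hfib, card_linearIndependent_eq_linIndepCount hr]

lemma card_mem_linearIndependent_comp (W : Submodule K X) (φ : X →ₗ[K] Z) {r : ℕ}
    (hr : r ≤ finrank K W - finrank K ↥(W ⊓ ker φ)) :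
    Nat.card {h : Fin r → X // (∀ i, h i ∈ W) ∧ LinearIndependent K (φ ∘ h)} =
      linIndepCount q (finrank K W - finrank K ↥(W ⊓ ker φ)) r *
        q ^ (finrank K ↥(W ⊓ ker φ) * r) := by
  have hker : finrank K (ker (φ ∘ₗ W.subtype)) = finrank K ↥(W ⊓ ker φ) := by
    rw [LinearMap.ker_comp, finrank_comap_subtype]
  have hrange : finrank K (range (φ ∘ₗ W.subtype)) = finrank K W - finrank K ↥(W ⊓ ker φ) := by
    rw [← hker, ← (φ ∘ₗ W.subtype).finrank_range_add_finrank_ker, Nat.add_sub_cancel]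
  have e : {h : Fin r → X // (∀ i, h i ∈ W) ∧ LinearIndependent K (φ ∘ h)} ≃
      {h : Fin r → W // LinearIndependent K ((φ ∘ₗ W.subtype) ∘ h)} :=
    { toFun h := ⟨fun i => ⟨h.1 i, h.2.1 i⟩, h.2.2⟩
      invFun h := ⟨fun i => h.1 i, fun i => (h.1 i).2, h.2⟩
      left_inv _ := rfl
      right_inv _ := rfl }
  rw [Nat.card_congr e, card_linearIndependent_comp _ (hrange ▸ hr), hrange, hker]

lemma card_mem_linearIndependent (W : Submodule K X) {t : ℕ} (ht : t ≤ finrank K W) :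
    Nat.card {g : Fin t → X // (∀ i, g i ∈ W) ∧ LinearIndependent K g} =
      linIndepCount q (finrank K W) t := by
  have hid : finrank K ↥(W ⊓ ker (LinearMap.id : X →ₗ[K] X)) = 0 := by
    rw [LinearMap.ker_id, inf_bot_eq, finrank_bot]
  simpa only [hid, Nat.sub_zero, zero_mul, pow_zero, mul_one, LinearMap.id_coe,
    Function.id_comp] using card_mem_linearIndependent_comp W LinearMap.id (r := t) (by omega)

lemma card_adaptedFrames (W : Submodule K X) {t r : ℕ} (ht : t ≤ finrank K ↥(W ⊓ S))
    (hr : r ≤ finrank K W - finrank K ↥(W ⊓ S)) :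
    Nat.card (adaptedFrames S W t r) = linIndepCount q (finrank K ↥(W ⊓ S)) t *
      (linIndepCount q (finrank K W - finrank K ↥(W ⊓ S)) r * q ^ (finrank K ↥(W ⊓ S) * r)) := by
  have e : adaptedFrames S W t r ≃
      {g : Fin t → X // (∀ i, g i ∈ W ⊓ S) ∧ LinearIndependent K g} ×
        {h : Fin r → X // (∀ i, h i ∈ W) ∧ LinearIndependent K (S.mkQ ∘ h)} :=
    @Equiv.subtypeProdEquivProd _ _ (fun g => (∀ i, g i ∈ W ⊓ S) ∧ LinearIndependent K g)
      (fun h => (∀ i, h i ∈ W) ∧ LinearIndependent K (S.mkQ ∘ h))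
  have h2 := card_mem_linearIndependent_comp W S.mkQ (r := r) (by rwa [S.ker_mkQ])
  rw [S.ker_mkQ] at h2
  rw [Nat.card_congr e, Nat.card_prod, card_mem_linearIndependent _ ht, h2]

lemma card_finrank_inf_mul {t r : ℕ} (ht : t ≤ finrank K S) (hr : r ≤ finrank K X - finrank K S) :
    Nat.card {W : Submodule K X // finrank K W = t + r ∧ finrank K ↥(W ⊓ S) = t} *
        (linIndepCount q t t * (linIndepCount q r r * q ^ (t * r))) =
      linIndepCount q (finrank K S) t *
        (linIndepCount q (finrank K X - finrank K S) r * q ^ (finrank K S * r)) := by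
  let f (p : adaptedFrames S ⊤ t r) :
      {W : Submodule K X // finrank K W = t + r ∧ finrank K ↥(W ⊓ S) = t} :=
    ⟨_, finrank_span_of_mem_adaptedFrames p.2⟩
  have hfib (W : {W : Submodule K X // finrank K W = t + r ∧ finrank K ↥(W ⊓ S) = t}) :
      Nat.card {p // f p = W} = linIndepCount q t t * (linIndepCount q r r * q ^ (t * r)) := by
    have e : {p // f p = W} ≃ adaptedFrames S W.1 t r :=
      (Equiv.subtypeEquivRight fun _ => Subtype.ext_iff).trans
        ((Equiv.subtypeSubtypeEquivSubtypeInter _ _).trans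
          (Equiv.subtypeEquivRight fun _ => mem_adaptedFrames_top_and_span_eq_iff W.2.1))
    rw [Nat.card_congr e, card_adaptedFrames S W.1 (by rw [W.2.2]) (by rw [W.2.1, W.2.2]; omega),
      W.2.1, W.2.2, Nat.add_sub_cancel_left]
  rw [← Nat.card_eq_card_mul_of_card_fiber f hfib,
    card_adaptedFrames S ⊤ (by rwa [top_inf_eq]) (by rwa [top_inf_eq, finrank_top]), top_inf_eq,
    finrank_top]

variable (K) in
lemma linIndepCount_dvd {a b : ℕ} (hba : b ≤ a) : linIndepCount q b b ∣ linIndepCount q a b := by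
  have key := card_finrank_inf_mul (⊥ : Submodule K (Fin a → K)) (t := 0) (r := b) (Nat.zero_le _)
    (by simpa using hba)
  simp only [finrank_bot, finrank_fin_fun, linIndepCount, Finset.range_zero, Finset.prod_empty,
    zero_add, zero_mul, pow_zero, mul_one, one_mul, Nat.sub_zero] at key
  exact Dvd.intro_left _ key

variable (K) in
lemma gbinom_mul_linIndepCount {a b : ℕ} (hba : b ≤ a) :
    gbinom q a b * linIndepCount q b b = linIndepCount q a b := by
  rw [gbinom, if_pos ⟨Int.natCast_nonneg b, Int.ofNat_le.2 hba⟩]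
  simp only [Int.toNat_natCast]
  exact Nat.div_mul_cancel (linIndepCount_dvd K hba)

theorem card_finrank_inf_eq {t m : ℕ} (htS : t ≤ finrank K S) (htm : t ≤ m)
    (hm : m - t ≤ finrank K X - finrank K S) :
    Nat.card {W : Submodule K X // finrank K W = m ∧ finrank K ↥(W ⊓ S) = t} =
      q ^ ((finrank K S - t) * (m - t)) * gbinom q ↑(finrank K X - finrank K S) ↑(m - t) *
        gbinom q ↑(finrank K S) ↑t := by
  obtain ⟨r, rfl⟩ : ∃ r, m = t + r := ⟨m - t, by omega⟩
  rw [Nat.add_sub_cancel_left] at hm ⊢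
  have hq : 1 < q := Fintype.one_lt_card
  have hpos : 0 < linIndepCount q t t * (linIndepCount q r r * q ^ (t * r)) :=
    Nat.mul_pos (linIndepCount_pos hq le_rfl)
      (Nat.mul_pos (linIndepCount_pos hq le_rfl) (by positivity))
  have hpow : q ^ (finrank K S * r) = q ^ ((finrank K S - t) * r) * q ^ (t * r) := by
    rw [← pow_add, ← add_mul, Nat.sub_add_cancel htS]
  apply Nat.eq_of_mul_eq_mul_right hpos
  rw [card_finrank_inf_mul S htS hm, ← gbinom_mul_linIndepCount K htS,
    ← gbinom_mul_linIndepCount K hm, hpow]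
  ring

end Counting

lemma Submodule.card_le_range_and_eq {R M N : Type*} [Ring R] [AddCommGroup M] [Module R M]
    [AddCommGroup N] [Module R N] {f : M →ₗ[R] N} (hf : Function.Injective f)
    (P : Submodule R N → Prop) :
    Nat.card {D : Submodule R N // D ≤ range f ∧ P D} =
      Nat.card {W : Submodule R M // P (W.map f)} :=
  Nat.card_congr
    { toFun D := ⟨D.1.comap f, by rw [map_comap_eq, inf_eq_right.2 D.2.1]; exact D.2.2⟩
      invFun W := ⟨W.1.map f, LinearMap.map_le_range, W.2⟩
      left_inv D := Subtype.ext <| show map f (comap f D.1) = D.1 by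
        rw [map_comap_eq, inf_eq_right.2 D.2.1]
      right_inv W := Subtype.ext (comap_map_eq_of_injective hf _) }

section Code

variable {K : Type} {V : Type*} [Field K] [AddCommGroup V] [Module K V] {S : Submodule K V}

def evalAt {ι : Type*} (cols : ι → V) : Module.Dual K V →ₗ[K] ι → K :=
  LinearMap.pi fun i => Module.Dual.eval K V (cols i)

@[simp]
lemma evalAt_apply {ι : Type*} (cols : ι → V) (f : Module.Dual K V) (i : ι) :
    evalAt cols f i = f (cols i) :=
  rfl

lemma evalAt_injective {ι : Type*} {cols : ι → V} (hS : S ≠ ⊤)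
    (hran : Set.range cols = (S : Set V)ᶜ) : Function.Injective (evalAt (K := K) cols) := by
  rw [← LinearMap.ker_eq_bot, eq_bot_iff]
  intro f hf
  have hcompl (v : V) (hv : v ∉ S) : f v = 0 := by
    obtain ⟨i, rfl⟩ : v ∈ Set.range cols := hran ▸ hv
    exact congrFun hf i
  obtain ⟨w, -, hw⟩ := SetLike.exists_of_lt (lt_top_iff_ne_top.2 hS)
  ext v
  by_cases hv : v ∈ S
  · have hvw : v + w ∉ S := fun h => hw (by simpa using S.sub_mem h hv)
    simpa [hcompl _ hw] using hcompl _ hvw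
  · exact hcompl v hv

lemma range_vecMulLinear_eq_range_evalAt {k n : ℕ} (G : Matrix (Fin k) (Fin n) K) :
    range G.vecMulLinear = range (evalAt fun c r => G r c) := by
  have hG : G.vecMulLinear = evalAt (fun c r => G r c) ∘ₗ (dotProductEquiv K (Fin k)).toLinearMap :=
    rfl
  rw [hG, LinearMap.range_comp_of_range_eq_top _ (LinearEquiv.range _)]

variable [Fintype K] [Finite V]

local notation "q" => Fintype.card K

variable {n : ℕ} {cols : Fin n → V}

lemma card_cols_mem (hinj : Function.Injective cols) (hran : Set.range cols = (S : Set V)ᶜ)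
    (U : Submodule K V) :
    Nat.card {i // cols i ∈ U} = q ^ finrank K U - q ^ finrank K ↥(U ⊓ S) := by
  have hpre : {i | cols i ∈ U} = cols ⁻¹' ((U : Set V) \ S) := by
    ext i
    have hi : cols i ∉ S := hran.subset (Set.mem_range_self i)
    simp [hi]
  have hcard (U' : Submodule K V) : (U' : Set V).ncard = q ^ finrank K U' :=
    (Nat.card_coe_set_eq _).symm.trans (natCard_submodule U')
  calc Nat.card {i // cols i ∈ U} = (cols ⁻¹' ((U : Set V) \ S)).ncard := by rw [← hpre]; rfl
    _ = ((U : Set V) \ S).ncard :=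
      Set.ncard_preimage_of_injective_subset_range hinj (hran ▸ Set.sdiff_subset_compl _ _)
    _ = q ^ finrank K U - q ^ finrank K ↥(U ⊓ S) := by
      rw [← hcard, ← hcard, ← Set.ncard_inter_add_ncard_sdiff_eq_ncard (U : Set V) S, coe_inf,
        Nat.add_sub_cancel_left]

lemma suppWeight_map_evalAt_add (hinj : Function.Injective cols)
    (hran : Set.range cols = (S : Set V)ᶜ) (W : Submodule K (Module.Dual K V)) :
    suppWeight (W.map (evalAt cols)) +
      (q ^ finrank K W.dualCoannihilator - q ^ finrank K ↥(W.dualCoannihilator ⊓ S)) = n := by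
  have hzero (i : Fin n) :
      (∃ c ∈ W.map (evalAt cols), c i ≠ 0) ↔ cols i ∉ W.dualCoannihilator := by
    simp [mem_dualCoannihilator]
  classical
  rw [suppWeight, Nat.card_congr (Equiv.subtypeEquivRight hzero), ← card_cols_mem hinj hran,
    Nat.card_eq_fintype_card, Nat.card_eq_fintype_card, Fintype.card_subtype_compl,
    Fintype.card_fin,
    Nat.sub_add_cancel ((Fintype.card_subtype_le _).trans_eq (Fintype.card_fin n))]

theorem card_subcodes_eq (hinj : Function.Injective cols) (hran : Set.range cols = (S : Set V)ᶜ)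
    (hS : S ≠ ⊤) {j : ℕ} (hj : j ≤ finrank K V) (i : ℕ) :
    Nat.card {D : Submodule K (Fin n → K) //
        D ≤ range (evalAt cols) ∧ finrank K D = j ∧ suppWeight D = i} =
      Nat.card {U : Submodule K V // finrank K U = finrank K V - j ∧
        (n : ℤ) - i = (q : ℤ) ^ (finrank K V - j) - (q : ℤ) ^ finrank K ↥(U ⊓ S)} := by
  have hev := evalAt_injective hS hran
  rw [card_le_range_and_eq hev]
  refine Nat.card_congr (Equiv.subtypeEquiv
    ((Subspace.orderIsoFiniteDimensional (K := K) (V := V)).toEquiv.trans OrderDual.ofDual)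
      fun U => ?_).symm
  have hfinrank : finrank K (U.dualAnnihilator.map (evalAt cols)) + finrank K U = finrank K V := by
    rw [← (equivMapOfInjective _ hev _).finrank_eq, add_comm,
      Subspace.finrank_add_finrank_dualAnnihilator_eq]
  have hweight := suppWeight_map_evalAt_add hinj hran U.dualAnnihilator
  rw [Subspace.dualAnnihilator_dualCoannihilator_eq] at hweight
  have hpow : q ^ finrank K ↥(U ⊓ S) ≤ q ^ finrank K U :=
    Nat.pow_le_pow_right Fintype.card_pos (finrank_mono inf_le_left)
  change _ ↔ finrank K (U.dualAnnihilator.map (evalAt cols)) = j ∧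
    suppWeight (U.dualAnnihilator.map (evalAt cols)) = i
  rw [← Nat.cast_pow, ← Nat.cast_pow]
  constructor
  · rintro ⟨hU, hi⟩
    rw [hU] at hweight hpow
    omega
  · rintro ⟨hU, rfl⟩
    have hU' : finrank K U = finrank K V - j := by omega
    rw [hU'] at hweight hpow
    omega

end Code

theorem stmt_7_general (q k n u : ℕ) (hu1 : 1 ≤ u) (huk : u ≤ k - 1)
    (F : Type) [Field F] [Fintype F] (hF : Fintype.card F = q)
    (S : Submodule F (Fin k → F)) (hS : Module.finrank F S = u)
    (G : Matrix (Fin k) (Fin n) F)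
    (hinj : Function.Injective fun c : Fin n => (fun r => G r c))
    (hran : Set.range (fun c : Fin n => (fun r => G r c)) = (S : Set (Fin k → F))ᶜ)
    (j i : ℕ) (hjk : j ≤ k) (hin : i ≤ n) :
    (∀ t : ℕ, u - j ≤ t → t ≤ u → ((n : ℤ) - i = (q : ℤ) ^ (k - j) - (q : ℤ) ^ t) →
        Nat.card {D : Submodule F (Fin n → F) //
            D ≤ LinearMap.range G.vecMulLinear ∧ Module.finrank F D = j ∧ suppWeight D = i} =
          q ^ ((u - t) * (k - j - t)) *
            gbinom q ((k : ℤ) - u) ((k : ℤ) - j - t) * gbinom q u t) ∧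
    ((¬ ∃ t : ℕ, u - j ≤ t ∧ t ≤ u ∧ ((n : ℤ) - i = (q : ℤ) ^ (k - j) - (q : ℤ) ^ t)) →
        Nat.card {D : Submodule F (Fin n → F) //
            D ≤ LinearMap.range G.vecMulLinear ∧ Module.finrank F D = j ∧ suppWeight D = i}
          = 0) := by
  subst hF
  have hk : finrank F (Fin k → F) = k := finrank_fin_fun F
  have hSne : S ≠ ⊤ := fun h => by rw [h, finrank_top, hk] at hS; omega
  rw [range_vecMulLinear_eq_range_evalAt,
    card_subcodes_eq hinj hran hSne (hjk.trans_eq hk.symm), hk]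
  refine ⟨fun t hut htu ht => ?_, fun hno => ?_⟩
  · have hq : 1 < Fintype.card F := Fintype.one_lt_card
    have htkj : t ≤ k - j := by
      rw [← Nat.cast_pow, ← Nat.cast_pow] at ht
      exact (Nat.pow_le_pow_iff_right hq).1 (by omega)
    have hdim (U : Submodule F (Fin k → F)) :
        (n : ℤ) - i = (Fintype.card F : ℤ) ^ (k - j) - (Fintype.card F : ℤ) ^ finrank F ↥(U ⊓ S) ↔
          finrank F ↥(U ⊓ S) = t := by
      rw [ht, sub_right_inj, ← Nat.cast_pow, ← Nat.cast_pow, Nat.cast_inj]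
      exact (Nat.pow_right_injective hq).eq_iff.trans eq_comm
    have hku : ((k - u : ℕ) : ℤ) = k - u := by omega
    have hkjt : ((k - j - t : ℕ) : ℤ) = k - j - t := by omega
    rw [Nat.card_congr (Equiv.subtypeEquivRight fun U => and_congr_right fun _ => hdim U),
      card_finrank_inf_eq S (htu.trans_eq hS.symm) htkj (by rw [hk, hS]; omega), hS, hk, hku, hkjt]
  · refine Nat.card_eq_zero.2 (Or.inl ⟨fun ⟨U, hU, hUS⟩ => hno ⟨_, ?_, ?_, hUS⟩⟩)
    · have hsup := Submodule.finrank_sup_add_finrank_inf_eq U S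
      have hle := (U ⊔ S).finrank_le
      omega
    · exact hS ▸ finrank_mono inf_le_right

/-- Support weight distribution of the Solomon–Stiffler code with `p = 1`:
for `1 ≤ j ≤ k` and `0 ≤ i ≤ n`, the number of `j`-dimensional subcodes of `C`
with support weight `i` is `q^{(u-t)(k-j-t)} [k-u, k-j-t]_q [u, t]_q` if
`n - i = q^{k-j} - q^t` for some `max(0, u-j) ≤ t ≤ u`, and `0` otherwise. -/
theorem stmt_7 (q k n u : ℕ) (hk : 2 ≤ k) (hu1 : 1 ≤ u) (huk : u ≤ k - 1)
    (F : Type) [Field F] [Fintype F] (hF : Fintype.card F = q)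
    (S : Submodule F (Fin k → F)) (hS : Module.finrank F S = u)
    (G : Matrix (Fin k) (Fin n) F)
    (hinj : Function.Injective fun c : Fin n => (fun r => G r c))
    (hran : Set.range (fun c : Fin n => (fun r => G r c)) = (S : Set (Fin k → F))ᶜ)
    (hn : n = q ^ k - q ^ u)
    (j i : ℕ) (hj1 : 1 ≤ j) (hjk : j ≤ k) (hin : i ≤ n) :
    (∀ t : ℕ, u - j ≤ t → t ≤ u → ((n : ℤ) - i = (q : ℤ) ^ (k - j) - (q : ℤ) ^ t) →
        Nat.card {D : Submodule F (Fin n → F) //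
            D ≤ LinearMap.range G.vecMulLinear ∧ Module.finrank F D = j ∧ suppWeight D = i} =
          q ^ ((u - t) * (k - j - t)) *
            gbinom q ((k : ℤ) - u) ((k : ℤ) - j - t) * gbinom q u t) ∧
    ((¬ ∃ t : ℕ, u - j ≤ t ∧ t ≤ u ∧ ((n : ℤ) - i = (q : ℤ) ^ (k - j) - (q : ℤ) ^ t)) →
        Nat.card {D : Submodule F (Fin n → F) //
            D ≤ LinearMap.range G.vecMulLinear ∧ Module.finrank F D = j ∧ suppWeight D = i}
          = 0) :=
  stmt_7_general q k n u hu1 huk F hF S hS G hinj hran j i hjk hin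
end
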